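/- arXiv:2402.01436 — 5 statements merged into one kernel-verified Lean document; each statement's English description precedes it below -/
import Mathlib

section
/- For real numbers x_1, ..., x_n, the determinant of the n×n matrix with (i,j)-entry x_i^{2n-2j+1}/(2n-2j+1)! equals the determinant of the n×n matrix with (i,j)-entry C(x_i + n - j, 2n-2j+1), where C denotes the generalized binomial coefficient. -/
/-- Generalized binomial coefficient `C(x,k) = x(x-1)⋯(x-k+1)/k!`. -/
noncomputable def gchoose (x : ℝ) (k : ℕ) : ℝ :=
  (∏ i ∈ Finset.range k, (x - i)) / (Nat.factorial k)

open Polynomial Finset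

noncomputable def Spoly (m : ℕ) : ℝ[X] := ∏ i ∈ range m, (X - C (((i:ℝ)+1)^2))

lemma Spoly_monic (m : ℕ) : (Spoly m).Monic :=
  monic_prod_of_monic _ _ fun _ _ => monic_X_sub_C _

lemma Spoly_natDegree (m : ℕ) : (Spoly m).natDegree = m := by
  unfold Spoly
  rw [natDegree_prod]
  · rw [Finset.sum_congr rfl fun i _ => natDegree_X_sub_C _]
    simp
  · intro i _; exact X_sub_C_ne_zero _

lemma lemA (m : ℕ) (x : ℝ) :
    ∏ i ∈ range (2*m+1), (x + m - i) = x * ∏ i ∈ range m, (x^2 - ((i:ℝ)+1)^2) := by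
  induction m with
  | zero => simp
  | succ m ih =>
    have h1 : 2*(m+1)+1 = (2*m+1)+1+1 := by ring
    rw [h1, prod_range_succ, prod_range_succ']
    have h2 : ∏ i ∈ range (2*m+1), (x + ((m:ℝ)+1) - ((i:ℕ)+1:ℝ))
        = ∏ i ∈ range (2*m+1), (x + m - i) := by
      apply prod_congr rfl; intro i _; ring
    push_cast
    rw [h2, ih, prod_range_succ]
    ring

lemma lemB (m : ℕ) (x : ℝ) :
    gchoose (x + m) (2*m+1)
      = (∑ k ∈ range (m+1), (Spoly m).coeff k * x^(2*k+1)) / (Nat.factorial (2*m+1)) := by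
  unfold gchoose
  congr 1
  have h : ∏ i ∈ range (2*m+1), (x + (m:ℝ) - i) = x * Polynomial.eval (x^2) (Spoly m) := by
    rw [lemA, Spoly, eval_prod]
    simp
  rw [h, eval_eq_sum_range, Spoly_natDegree, Finset.mul_sum]
  apply Finset.sum_congr rfl
  intro k _
  rw [pow_add, pow_mul]
  ring

theorem det_odd_pow_factorial_eq_det_gchoose (n : ℕ) (x : Fin n → ℝ) :
    Matrix.det (Matrix.of fun i j : Fin n =>
        x i ^ (2 * (n - 1 - (j : ℕ)) + 1) / (Nat.factorial (2 * (n - 1 - (j : ℕ)) + 1))) =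
    Matrix.det (Matrix.of fun i j : Fin n =>
        gchoose (x i + ((n - 1 - (j : ℕ) : ℕ) : ℝ)) (2 * (n - 1 - (j : ℕ)) + 1)) := by
  classical
  set m : Fin n → ℕ := fun j => n - 1 - (j:ℕ) with hm
  set A : Matrix (Fin n) (Fin n) ℝ := Matrix.of fun i j =>
    x i ^ (2 * m j + 1) / (Nat.factorial (2 * m j + 1)) with hA
  set B : Matrix (Fin n) (Fin n) ℝ := Matrix.of fun k j =>
    (Spoly (m j)).coeff (m k) * (Nat.factorial (2 * m k + 1)) / (Nat.factorial (2 * m j + 1))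
    with hB
  have hfac : ∀ t : ℕ, ((Nat.factorial t : ℝ)) ≠ 0 := fun t => by
    exact_mod_cast Nat.factorial_ne_zero t
  have key : (Matrix.of fun i j : Fin n =>
      gchoose (x i + ((m j : ℕ) : ℝ)) (2 * m j + 1)) = A * B := by
    ext i j
    rw [Matrix.mul_apply]
    simp only [hA, hB, Matrix.of_apply]
    set g : ℕ → ℝ := fun t => (Spoly (m j)).coeff t * x i ^ (2*t+1) with hg
    have step1 : gchoose (x i + ((m j : ℕ) : ℝ)) (2 * m j + 1)
        = (∑ t ∈ range (m j + 1), g t) / (Nat.factorial (2 * m j + 1)) := lemB (m j) (x i)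
    have hsub : range (m j + 1) ⊆ range n := by
      apply range_subset_range.2
      have := j.isLt
      simp only [hm]; omega
    have step2 : ∑ t ∈ range (m j + 1), g t = ∑ t ∈ range n, g t := by
      apply Finset.sum_subset hsub
      intro t _ ht
      have : (Spoly (m j)).natDegree < t := by
        rw [Spoly_natDegree]
        simp only [mem_range] at ht ⊢
        omega
      simp [hg, coeff_eq_zero_of_natDegree_lt this]
    have step3 : ∑ t ∈ range n, g t = ∑ k : Fin n, g (m k) := by
      rw [← Fin.sum_univ_eq_sum_range]
      rw [← Fin.rev_involutive.bijective.sum_comp (fun k : Fin n => g (k:ℕ))]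
      apply Finset.sum_congr rfl
      intro k _
      congr 1
      rw [Fin.val_rev]
      simp only [hm]
      omega
    rw [step1, step2, step3, Finset.sum_div]
    apply Finset.sum_congr rfl
    intro k _
    simp only [hg]
    field_simp
  have hBtri : B.BlockTriangular (OrderDual.toDual : Fin n → (Fin n)ᵒᵈ) := by
    intro k j h
    have hkj : k < j := h
    have hmj : m j < m k := by
      have := j.isLt
      simp only [hm]
      omega
    simp only [hB, Matrix.of_apply]
    rw [coeff_eq_zero_of_natDegree_lt (by rw [Spoly_natDegree]; exact hmj)]
    ring
  have hBdiag : ∀ j : Fin n, B j j = 1 := by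
    intro j
    simp only [hB, Matrix.of_apply]
    have : (Spoly (m j)).coeff (m j) = 1 := by
      have := (Spoly_monic (m j)).leadingCoeff
      rwa [Polynomial.leadingCoeff, Spoly_natDegree] at this
    rw [this, one_mul, div_self (hfac _)]
  calc Matrix.det A = Matrix.det A * Matrix.det B := by
        rw [Matrix.det_of_lowerTriangular B hBtri]
        rw [Finset.prod_congr rfl fun j _ => hBdiag j]
        simp
    _ = Matrix.det (A * B) := (Matrix.det_mul A B).symm
    _ = _ := by rw [← key]
end

section
/- For real numbers x_1, ..., x_n, the determinant of the n×n matrix with (i,j)-entry x_i^{2n-2j}/(2n-2j)! equals the determinant of the n×n matrix with (i,j)-entry C(x_i + n - j - 1/2, 2n-2j), where C denotes the generalized binomial coefficient. -/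
open Polynomial Finset

noncomputable def pm (m : ℕ) : Polynomial ℝ :=
  ∏ k ∈ Finset.range m, (X - C (((k : ℝ) + 1/2)^2))

lemma pm_monic (m : ℕ) : (pm m).Monic :=
  monic_prod_of_monic _ _ fun _ _ => monic_X_sub_C _

lemma pm_natDegree (m : ℕ) : (pm m).natDegree = m := by
  unfold pm
  rw [natDegree_prod_of_monic _ _ fun k _ => monic_X_sub_C _]
  simp only [natDegree_X_sub_C]
  simp

lemma prod_eval (m : ℕ) (x : ℝ) :
    ∏ i ∈ Finset.range (2*m), (x + (m : ℝ) - 1/2 - i) = (pm m).eval (x^2) := by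
  induction m with
  | zero => simp [pm]
  | succ m ih =>
    have h2 : 2*(m+1) = (2*m+1)+1 := by ring
    have hc : ∀ i ∈ Finset.range (2*m),
        (x + ((m+1:ℕ) : ℝ) - 1/2 - ((i+1:ℕ):ℝ)) = (x + (m : ℝ) - 1/2 - (i:ℝ)) :=
      fun i _ => by push_cast; ring
    have hp : pm (m+1) = pm m * (X - C (((m : ℝ) + 1/2)^2)) := by
      rw [pm, Finset.prod_range_succ]; rfl
    rw [h2, Finset.prod_range_succ', Finset.prod_range_succ, Finset.prod_congr rfl hc,
      ih, hp, eval_mul]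
    simp only [eval_sub, eval_X, eval_C]
    push_cast; ring

lemma gchoose_eq (m : ℕ) (x : ℝ) :
    gchoose (x + (m:ℝ) - 1/2) (2*m) = (pm m).eval (x^2) / (Nat.factorial (2*m)) := by
  rw [gchoose, ← prod_eval]

theorem det_even_pow_factorial_eq_det_gchoose (n : ℕ) (x : Fin n → ℝ) :
    Matrix.det (Matrix.of fun i j : Fin n =>
        x i ^ (2 * (n - 1 - (j : ℕ))) / (Nat.factorial (2 * (n - 1 - (j : ℕ))))) =
    Matrix.det (Matrix.of fun i j : Fin n =>
        gchoose (x i + ((n - 1 - (j : ℕ) : ℕ) : ℝ) - 1/2) (2 * (n - 1 - (j : ℕ)))) := by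
  rcases Nat.eq_zero_or_pos n with hn | hn
  · subst hn; simp [Matrix.det_isEmpty]
  set U : Matrix (Fin n) (Fin n) ℝ := Matrix.of fun j' j =>
    (pm (n - 1 - (j : ℕ))).coeff (n - 1 - (j' : ℕ)) *
      (Nat.factorial (2 * (n - 1 - (j' : ℕ)))) / (Nat.factorial (2 * (n - 1 - (j : ℕ)))) with hUdef
  have hfac : ∀ k : ℕ, ((Nat.factorial k : ℝ)) ≠ 0 :=
    fun k => Nat.cast_ne_zero.mpr (Nat.factorial_ne_zero k)
  have key : (Matrix.of fun i j : Fin n =>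
        gchoose (x i + ((n - 1 - (j : ℕ) : ℕ) : ℝ) - 1/2) (2 * (n - 1 - (j : ℕ)))) =
      (Matrix.of fun i j : Fin n =>
        x i ^ (2 * (n - 1 - (j : ℕ))) / (Nat.factorial (2 * (n - 1 - (j : ℕ))))) * U := by
    ext i j
    rw [Matrix.mul_apply]
    simp only [Matrix.of_apply, hUdef]
    rw [gchoose_eq]
    have hd : (pm (n - 1 - (j : ℕ))).natDegree < n := by
      rw [pm_natDegree]; omega
    rw [eval_eq_sum_range' hd, Finset.sum_div, ← Fin.sum_univ_eq_sum_range]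
    rw [← Equiv.sum_comp Fin.revPerm
      (fun k : Fin n => (pm (n - 1 - (j:ℕ))).coeff (k:ℕ) * (x i ^ 2) ^ (k:ℕ)
        / (Nat.factorial (2 * (n - 1 - (j : ℕ)))))]
    apply Finset.sum_congr rfl
    intro j' _
    have hrev : ((Fin.revPerm j' : Fin n) : ℕ) = n - 1 - (j' : ℕ) := by
      simp [Fin.val_rev]; omega
    rw [hrev, pow_mul]
    field_simp
  have hU : U.BlockTriangular OrderDual.toDual := by
    intro j' j h
    have hj : (j' : ℕ) < (j : ℕ) := h
    have hz : (pm (n - 1 - (j : ℕ))).coeff (n - 1 - (j' : ℕ)) = 0 := by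
      apply Polynomial.coeff_eq_zero_of_natDegree_lt
      rw [pm_natDegree]
      omega
    simp [hUdef, hz]
  rw [key, Matrix.det_mul, Matrix.det_of_lowerTriangular U hU]
  have hdiag : ∀ j : Fin n, U j j = 1 := by
    intro j
    have hm : (pm (n - 1 - (j : ℕ))).coeff (n - 1 - (j : ℕ)) = 1 := by
      have := (pm_monic (n - 1 - (j : ℕ))).coeff_natDegree
      rwa [pm_natDegree] at this
    simp [hUdef, hm, div_self (hfac _)]
  simp [hdiag]
end

section
/- For elements x_1, ..., x_n of a commutative ring, the determinant of the n×n matrix with (i,j)-entry x_i^{2n-2j+1} equals the product over 1 ≤ i < j ≤ n of (x_i^2 - x_j^2), multiplied by the product of all x_i for 1 ≤ i ≤ n. -/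
/-! Factoring `x i` out of row `i` leaves the Vandermonde matrix of the squares `x i ^ 2`, with its
columns in decreasing powers; that is `projVandermonde 1 (x ^ 2)`, whose determinant Mathlib knows. -/

open Finset

namespace Matrix

theorem det_of_pow_sub_one_sub {R : Type*} [CommRing R] {n : ℕ} (v : Fin n → R) :
    det (of fun i j : Fin n => v i ^ (n - 1 - (j : ℕ))) = ∏ i : Fin n, ∏ j ∈ Ioi i, (v i - v j) := by
  have hproj : (of fun i j : Fin n => v i ^ (n - 1 - (j : ℕ))) = projVandermonde 1 v := by
    ext i j
    simp [projVandermonde_apply, Fin.val_rev, Nat.sub_sub, Nat.add_comm 1]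
  simp [hproj, det_projVandermonde]

end Matrix

theorem det_odd_vandermonde {R : Type*} [CommRing R] (n : ℕ) (x : Fin n → R) :
    Matrix.det (Matrix.of fun i j : Fin n => x i ^ (2 * (n - 1 - (j : ℕ)) + 1)) =
    (∏ i : Fin n, ∏ j ∈ Finset.Ioi i, (x i ^ 2 - x j ^ 2)) * ∏ i : Fin n, x i := by
  have hfactor : (Matrix.of fun i j : Fin n => x i ^ (2 * (n - 1 - (j : ℕ)) + 1)) =
      Matrix.of fun i j => x i * Matrix.of (fun i j : Fin n => (x i ^ 2) ^ (n - 1 - (j : ℕ))) i j := by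
    ext i j
    rw [Matrix.of_apply, Matrix.of_apply, Matrix.of_apply, pow_succ', pow_mul]
  rw [hfactor, Matrix.det_mul_column, Matrix.det_of_pow_sub_one_sub, mul_comm]
end

section
/- For ρ_i = n - i + 1/2 (1 ≤ i ≤ n), the product over 1 ≤ i < j ≤ n of (ρ_i^2 - ρ_j^2), multiplied by the product of ρ_i over 1 ≤ i ≤ n, equals 2^{-n} times the product over j from 1 to n of (2n - 2j + 1)!. -/
/-!
Peeling off the largest coordinate `ρ₁ = n - 1/2` leaves the same configuration for `n - 1`, and
`(n - 1/2)² - (n - k - 3/2)² = (2n - 2 - k)(k + 1)`, so the new factors multiply to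
`(2n - 2)! · (n - 1/2) = (2n - 1)! / 2`; induction on `n` gives the product formula.
-/

open Finset Nat

/-- The coordinate `ρ_{i+1} = n - (i + 1) + 1/2`, indexed from `0`. -/
abbrev rho (n i : ℕ) : ℚ := n - i - 1 / 2

lemma rho_succ_succ (n i : ℕ) : rho (n + 1) (i + 1) = rho n i := by
  simp only [rho]; push_cast; ring

lemma sq_rho_succ_zero_sub_sq_rho (n k : ℕ) :
    rho (n + 1) 0 ^ 2 - rho n k ^ 2 = (2 * n - k) * (k + 1) := by
  simp only [rho]; push_cast; ring

lemma prod_range_two_mul_sub_mul_succ (n : ℕ) :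
    ∏ k ∈ range n, (((2 * n - k : ℕ) : ℚ) * (k + 1)) = (2 * n)! := by
  have hdesc : n ! * (2 * n).descFactorial n = (2 * n)! := by
    simpa [two_mul] using factorial_mul_descFactorial (show n ≤ 2 * n by omega)
  rw [prod_mul_distrib, ← hdesc, descFactorial_eq_prod_range, ← prod_range_add_one_eq_factorial]
  push_cast
  ring

def rhoSqDiffProd (n : ℕ) : ℚ :=
  ∏ i : Fin n, ∏ j ∈ Ioi i, (rho n i ^ 2 - rho n j ^ 2)

lemma rhoSqDiffProd_succ (n : ℕ) : rhoSqDiffProd (n + 1) = (2 * n)! * rhoSqDiffProd n := by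
  have hfirst : ∏ j : Fin n, (rho (n + 1) 0 ^ 2 - rho n j ^ 2) = (2 * n)! := by
    rw [← prod_range_two_mul_sub_mul_succ, ← Fin.prod_univ_eq_prod_range]
    refine prod_congr rfl fun j _ => ?_
    rw [sq_rho_succ_zero_sub_sq_rho, Nat.cast_sub (by omega)]
    push_cast; ring
  simp only [rhoSqDiffProd, Fin.prod_univ_succ, Fin.prod_Ioi_zero, Fin.prod_Ioi_succ,
    Fin.val_succ, Fin.val_zero, rho_succ_succ, hfirst]

lemma prod_rho_succ (n : ℕ) :
    ∏ i : Fin (n + 1), rho (n + 1) i = (n + 1 / 2) * ∏ i : Fin n, rho n i := by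
  simp only [Fin.prod_univ_succ, Fin.val_succ, Fin.val_zero, rho_succ_succ]
  congr 1
  simp only [rho]; push_cast; ring

lemma rhoSqDiffProd_mul_prod_rho (n : ℕ) :
    rhoSqDiffProd n * ∏ i : Fin n, rho n i = ∏ j ∈ range n, ((2 * j + 1)! / 2 : ℚ) := by
  induction n with
  | zero => simp [rhoSqDiffProd]
  | succ n ih =>
    rw [rhoSqDiffProd_succ, prod_rho_succ, prod_range_succ, ← ih, factorial_succ]
    push_cast
    ring

theorem prod_rho_so_odd (n : ℕ) :
    (∏ i : Fin n, ∏ j ∈ Finset.Ioi i,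
        (((n : ℚ) - (i : ℕ) - 1/2) ^ 2 - ((n : ℚ) - (j : ℕ) - 1/2) ^ 2)) *
      (∏ i : Fin n, ((n : ℚ) - (i : ℕ) - 1/2)) =
    (1 / 2 ^ n) * ∏ j ∈ Finset.range n, (Nat.factorial (2 * (n - 1 - j) + 1) : ℚ) := by
  calc _ = rhoSqDiffProd n * ∏ i : Fin n, rho n i := rfl
    _ = ∏ j ∈ range n, ((2 * j + 1)! / 2 : ℚ) := rhoSqDiffProd_mul_prod_rho n
    _ = _ := by
      rw [prod_range_reflect (fun j => ((2 * j + 1)! : ℚ)), prod_div_distrib, prod_const,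
        card_range]
      ring
end

section
/- For every real number x and integers j, k with 1 ≤ j ≤ n, there exist rational constants b_{j,k} (for j+1 ≤ k ≤ n) such that C(x + n - j, 2n - 2j + 1) = x^{2n-2j+1}/(2n-2j+1)! + Σ_{k=j+1}^{n} b_{j,k} · x^{2n-2k+1}/(2n-2k+1)!. -/
private lemma prod_shift (m : ℕ) (x : ℝ) :
    ∏ i ∈ Finset.range (2 * m + 1), (x + (m : ℝ) - (i : ℝ)) =
      x * ∏ i ∈ Finset.Icc 1 m, (x ^ 2 - (i : ℝ) ^ 2) := by
  induction m with
  | zero => simp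
  | succ m ih =>
    have h1 : 2 * (m + 1) + 1 = (2 * m + 2) + 1 := by ring
    rw [h1, Finset.prod_range_succ', Finset.prod_range_succ]
    have h2 : ∀ i : ℕ, x + ((m + 1 : ℕ) : ℝ) - ((i + 1 : ℕ) : ℝ) = x + (m : ℝ) - (i : ℝ) := by
      intro i; push_cast; ring
    simp only [h2]
    rw [ih, Finset.prod_Icc_succ_top (Nat.le_add_left 1 m)]
    push_cast
    ring

private lemma exists_coeffs (m : ℕ) : ∃ a : ℕ → ℚ, a m = 1 ∧ ∀ x : ℝ,
    ∏ i ∈ Finset.Icc 1 m, (x ^ 2 - (i : ℝ) ^ 2) =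
      ∑ t ∈ Finset.range (m + 1), (a t : ℝ) * x ^ (2 * t) := by
  induction m with
  | zero => exact ⟨fun _ => 1, rfl, fun x => by simp⟩
  | succ m ih =>
    obtain ⟨a, ham, ha⟩ := ih
    refine ⟨fun t => (if 1 ≤ t then a (t - 1) else 0) -
      ((m : ℚ) + 1) ^ 2 * (if t ≤ m then a t else 0), ?_, ?_⟩
    · simp [ham, Nat.succ_le_iff]
    · intro x
      rw [Finset.prod_Icc_succ_top (Nat.le_add_left 1 m), ha x]
      have expand : ∀ t : ℕ,
          (((if 1 ≤ t then a (t - 1) else 0) -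
            ((m : ℚ) + 1) ^ 2 * (if t ≤ m then a t else 0) : ℚ) : ℝ) * x ^ (2 * t) =
          (if 1 ≤ t then (a (t - 1) : ℝ) * x ^ (2 * t) else 0) -
          ((m : ℝ) + 1) ^ 2 * (if t ≤ m then (a t : ℝ) * x ^ (2 * t) else 0) := by
        intro t
        by_cases h1 : 1 ≤ t <;> by_cases h2 : t ≤ m <;> simp [h1, h2] <;> push_cast <;> ring
      rw [Finset.sum_congr rfl (fun t _ => expand t), Finset.sum_sub_distrib,
        ← Finset.mul_sum]
      have hfirst : ∑ t ∈ Finset.range (m + 2),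
          (if 1 ≤ t then (a (t - 1) : ℝ) * x ^ (2 * t) else 0) =
          ∑ t ∈ Finset.range (m + 1), (a t : ℝ) * x ^ (2 * t + 2) := by
        rw [Finset.sum_range_succ' (fun t => if 1 ≤ t then (a (t - 1) : ℝ) * x ^ (2 * t) else 0)]
        simp only [Nat.le_add_left 1, if_true, Nat.add_sub_cancel]
        simp [mul_add]
      have hsecond : ∑ t ∈ Finset.range (m + 2),
          (if t ≤ m then (a t : ℝ) * x ^ (2 * t) else 0) =
          ∑ t ∈ Finset.range (m + 1), (a t : ℝ) * x ^ (2 * t) := by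
        rw [Finset.sum_range_succ]
        simp only [Nat.lt_irrefl, Nat.not_succ_le_self, if_false, add_zero]
        exact Finset.sum_congr rfl fun t ht => by
          simp [Nat.lt_succ_iff.mp (Finset.mem_range.mp ht)]
      rw [hfirst, hsecond, Finset.mul_sum, ← Finset.sum_sub_distrib, Finset.sum_mul]
      exact Finset.sum_congr rfl fun t _ => by push_cast; ring

theorem gchoose_odd_expansion (n j : ℕ) (hj1 : 1 ≤ j) (hjn : j ≤ n) :
    ∃ b : ℕ → ℚ, ∀ x : ℝ,
      gchoose (x + ((n - j : ℕ) : ℝ)) (2 * (n - j) + 1) =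
        x ^ (2 * (n - j) + 1) / (Nat.factorial (2 * (n - j) + 1)) +
        ∑ k ∈ Finset.Icc (j + 1) n,
          (b k : ℝ) * x ^ (2 * (n - k) + 1) / (Nat.factorial (2 * (n - k) + 1)) := by
  set m := n - j with hm
  clear_value m
  obtain ⟨a, ham, ha⟩ := exists_coeffs m
  refine ⟨fun k => a (n - k) * (Nat.factorial (2 * (n - k) + 1) : ℚ) /
    (Nat.factorial (2 * m + 1) : ℚ), fun x => ?_⟩
  have hF : (Nat.factorial (2 * m + 1) : ℝ) ≠ 0 := by positivity
  unfold gchoose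
  have hterm : ∀ i : ℕ, (x + (m : ℝ)) - (i : ℝ) = x + (m : ℝ) - (i : ℝ) := fun i => rfl
  rw [prod_shift m x, ha x]
  have key : x * ∑ t ∈ Finset.range (m + 1), (a t : ℝ) * x ^ (2 * t) =
      x ^ (2 * m + 1) + ∑ t ∈ Finset.range m, (a t : ℝ) * x ^ (2 * t + 1) := by
    rw [Finset.mul_sum, Finset.sum_range_succ, ham]
    rw [add_comm]
    congr 1
    · push_cast; ring
    · exact Finset.sum_congr rfl fun t _ => by ring
  rw [key, add_div]
  congr 1
  have hsum : ∑ k ∈ Finset.Icc (j + 1) n,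
      ((a (n - k) * (Nat.factorial (2 * (n - k) + 1) : ℚ) /
        (Nat.factorial (2 * m + 1) : ℚ) : ℚ) : ℝ) * x ^ (2 * (n - k) + 1) /
        (Nat.factorial (2 * (n - k) + 1)) =
      ∑ k ∈ Finset.Icc (j + 1) n, (a (n - k) : ℝ) * x ^ (2 * (n - k) + 1) /
        (Nat.factorial (2 * m + 1)) := by
    refine Finset.sum_congr rfl fun k _ => ?_
    have hFk : (Nat.factorial (2 * (n - k) + 1) : ℝ) ≠ 0 := by positivity
    push_cast
    field_simp
  rw [hsum]
  rw [Finset.sum_div]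
  refine (Finset.sum_nbij' (fun k => n - k) (fun t => n - t) ?_ ?_ ?_ ?_ ?_).symm
  all_goals intro t ht
  all_goals simp only [Finset.mem_Icc, Finset.mem_range] at ht ⊢
  all_goals first
    | omega
    | (have h1 : n - (n - t) = t := by omega
       rw [h1])
end
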